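/- A concrete category (A, U) over C is monadic if and only if it is a Beck category (U creates limits and coequalizers of U-absolute pairs) and U admits a pointwise codensity monad. -/

import Mathlib

open CategoryTheory CategoryTheory.Limits

universe v u

/-!
Monadic functors create all limits, and by Beck's theorem a right adjoint is monadic exactly
when it creates coequalizers of `U`-split pairs. It remains to see that a functor `U` creating
limits is a right adjoint iff the limits of `c ↓ U ⟶ A ⟶ C` defining the pointwise codensity
monad exist. If `U` is a right adjoint, every `c ↓ U` has an initial object, so they do.
Conversely, `U` lifts such a limit to a limit of the identity functor of `c ↓ U`, whose apex is
an initial object.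
-/

lemma CategoryTheory.Limits.hasInitial_of_hasLimit_id {J : Type*} [Category J]
    [HasLimit (𝟭 J)] : HasInitial J := by
  have π_self : limit.π (𝟭 J) (limit (𝟭 J)) = 𝟙 _ :=
    limit.hom_ext fun j => (limit.w (𝟭 J) (limit.π (𝟭 J) j)).trans (Category.id_comp _).symm
  refine (IsInitial.ofUniqueHom (limit.π (𝟭 J)) fun j m => ?_).hasInitial
  simpa [π_self] using limit.w (𝟭 J) m

namespace CategoryTheory.Functor

variable {A : Type*} [Category A] {C : Type*} [Category C] {H : Type*} [Category H]

lemma hasInitial_structuredArrow_of_createsLimit (U : A ⥤ C) (c : C)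
    [CreatesLimit (StructuredArrow.proj c U) U] [HasPointwiseRightKanExtensionAt U U c] :
    HasInitial (StructuredArrow c U) :=
  have : HasLimit (StructuredArrow.proj c U) := hasLimit_of_created _ U
  have : PreservesLimit (StructuredArrow.proj c U) U :=
    preservesLimit_of_createsLimit_and_hasLimit _ U
  hasInitial_of_hasLimit_id

lemma isRightAdjoint_of_hasPointwiseRightKanExtension_self (U : A ⥤ C)
    [∀ c : C, CreatesLimit (StructuredArrow.proj c U) U] [HasPointwiseRightKanExtension U U] :
    U.IsRightAdjoint :=
  have := fun c => hasInitial_structuredArrow_of_createsLimit U c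
  isRightAdjointOfStructuredArrowInitials U

instance hasPointwiseRightKanExtension_of_isRightAdjoint (G : A ⥤ C) [G.IsRightAdjoint]
    (F : A ⥤ H) : HasPointwiseRightKanExtension G F := fun c =>
  have := isRightAdjoint_iff_hasInitial_structuredArrow.mp ‹G.IsRightAdjoint› c
  inferInstance

end CategoryTheory.Functor

theorem stmt7_general {A : Type u} [Category.{v} A] {C : Type u} [Category.{v} C]
    (U : A ⥤ C) :
    Nonempty (MonadicRightAdjoint U) ↔
      (Nonempty (CreatesLimitsOfSize.{v, max u v} U) ∧
       (∀ {X Y : A} (f g : X ⟶ Y), HasSplitCoequalizer (U.map f) (U.map g) →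
         Nonempty (CreatesColimit (parallelPair f g) U)) ∧
       Functor.HasPointwiseRightKanExtension U U) := by
  constructor
  · rintro ⟨_⟩
    refine ⟨⟨monadicCreatesLimits U⟩, fun f g hsplit => ?_, inferInstance⟩
    have : U.IsSplitPair f g := hsplit
    exact ⟨Monad.createsGSplitCoequalizersOfMonadic U f g⟩
  · rintro ⟨⟨_⟩, hsplit, _⟩
    have : U.IsRightAdjoint := U.isRightAdjoint_of_hasPointwiseRightKanExtension_self
    have : Monad.CreatesColimitOfIsSplitPair U := ⟨fun f g h => (hsplit f g h).some⟩
    exact ⟨Monad.monadicOfCreatesGSplitCoequalizers (Adjunction.ofIsRightAdjoint U)⟩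

/-- A concrete category `(A, U)` over `C` is monadic if and only if it is a Beck category
(`U` creates all limits and coequalizers of `U`-absolute (split) pairs) and `U` admits a
pointwise codensity monad (a pointwise right Kan extension of `U` along `U`). -/
theorem stmt7 {A : Type u} [Category.{v} A] {C : Type u} [Category.{v} C]
    (U : A ⥤ C) [U.Faithful] :
    Nonempty (MonadicRightAdjoint U) ↔
      (Nonempty (CreatesLimitsOfSize.{v, max u v} U) ∧
       (∀ {X Y : A} (f g : X ⟶ Y), HasSplitCoequalizer (U.map f) (U.map g) →
         Nonempty (CreatesColimit (parallelPair f g) U)) ∧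
       Functor.HasPointwiseRightKanExtension U U) :=
  stmt7_general U
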